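/- For all λ, x ∈ ℂ one has the product representation c(iλx) = (1/3)·(4·cos(λx/2)·cos(ωλx/2)·cos(ω²λx/2) − 1 − 4·i·sin(λx/2)·sin(ωλx/2)·sin(ω²λx/2)), where cos and sin denote the complex cosine and sine. -/
import Mathlib


open Complex

/-- ω = exp(2πi/3), a primitive cube root of unity. -/
noncomputable def ω : ℂ := Complex.exp (2 * Real.pi * Complex.I / 3)

/-- c(z) = (1/3)·∑_{k=1}^{3} exp(ω^k z). -/
noncomputable def cf (z : ℂ) : ℂ :=
  (1/3) * (Complex.exp (ω ^ 1 * z) + Complex.exp (ω ^ 2 * z) + Complex.exp (ω ^ 3 * z))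

/-- s(z) = (1/3)·∑_{k=1}^{3} ω^{-k} exp(ω^k z). -/
noncomputable def sf (z : ℂ) : ℂ :=
  (1/3) * ((ω ^ 1)⁻¹ * Complex.exp (ω ^ 1 * z) + (ω ^ 2)⁻¹ * Complex.exp (ω ^ 2 * z) +
    (ω ^ 3)⁻¹ * Complex.exp (ω ^ 3 * z))

/-- d(z) = (1/3)·∑_{k=1}^{3} ω^k exp(ω^k z). -/
noncomputable def df (z : ℂ) : ℂ :=
  (1/3) * (ω ^ 1 * Complex.exp (ω ^ 1 * z) + ω ^ 2 * Complex.exp (ω ^ 2 * z) +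
    ω ^ 3 * Complex.exp (ω ^ 3 * z))

lemma hω3 : ω ^ 3 = 1 := by
  rw [ω, ← Complex.exp_nat_mul]
  rw [show (3 : ℕ) * (2 * (Real.pi:ℂ) * Complex.I / 3) = 2 * Real.pi * Complex.I by
    push_cast; ring]
  exact Complex.exp_two_pi_mul_I

lemma hωne : ω ≠ 1 := by
  rw [ω, Ne, Complex.exp_eq_one_iff]
  rintro ⟨n, hn⟩
  have ht : (2 * (Real.pi:ℂ) * Complex.I) ≠ 0 := Complex.two_pi_I_ne_zero
  have h : (1 - 3 * (n:ℂ)) * (2 * (Real.pi:ℂ) * Complex.I) = 0 := by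
    linear_combination 3 * hn
  have h2 : (1 - 3 * (n:ℂ)) = 0 := (mul_eq_zero.mp h).resolve_right ht
  have h3 : (1 - 3 * n : ℤ) = 0 := by exact_mod_cast h2
  omega

lemma hsum : ω ^ 2 + ω + 1 = 0 := by
  have h : (ω - 1) * (ω ^ 2 + ω + 1) = 0 := by linear_combination hω3
  rcases mul_eq_zero.mp h with h1 | h2
  · exact absurd (sub_eq_zero.mp h1) hωne
  · exact h2

/-- product representation of c(iλx). -/
theorem stmt_9 (lam x : ℂ) :
    cf (Complex.I * lam * x) =
      (1/3) * (4 * Complex.cos (lam * x / 2) * Complex.cos (ω * lam * x / 2) *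
          Complex.cos (ω ^ 2 * lam * x / 2)
        - 1 - 4 * Complex.I * Complex.sin (lam * x / 2) * Complex.sin (ω * lam * x / 2) *
          Complex.sin (ω ^ 2 * lam * x / 2)) := by
  have hs := hsum
  simp only [cf, hω3, pow_one, one_mul, Complex.cos, Complex.sin]
  set A := Complex.exp (lam * x / 2 * Complex.I) with hAdef
  set B := Complex.exp (ω * lam * x / 2 * Complex.I) with hBdef
  set C := Complex.exp (ω ^ 2 * lam * x / 2 * Complex.I) with hCdef
  have hA0 : A ≠ 0 := Complex.exp_ne_zero _
  have hB0 : B ≠ 0 := Complex.exp_ne_zero _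
  have e1 : Complex.exp (Complex.I * lam * x) = A ^ 2 := by
    rw [hAdef, ← Complex.exp_nat_mul]; congr 1; push_cast; ring
  have e2 : Complex.exp (ω * (Complex.I * lam * x)) = B ^ 2 := by
    rw [hBdef, ← Complex.exp_nat_mul]; congr 1; push_cast; ring
  have e3 : Complex.exp (ω ^ 2 * (Complex.I * lam * x)) = C ^ 2 := by
    rw [hCdef, ← Complex.exp_nat_mul]; congr 1; push_cast; ring
  have en1 : Complex.exp (-(lam * x / 2) * Complex.I) = A⁻¹ := by
    rw [hAdef, ← Complex.exp_neg]; congr 1; ring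
  have en2 : Complex.exp (-(ω * lam * x / 2) * Complex.I) = B⁻¹ := by
    rw [hBdef, ← Complex.exp_neg]; congr 1; ring
  have en3 : Complex.exp (-(ω ^ 2 * lam * x / 2) * Complex.I) = C⁻¹ := by
    rw [hCdef, ← Complex.exp_neg]; congr 1; ring
  have hC : C = (A * B)⁻¹ := by
    rw [hCdef, hAdef, hBdef, ← Complex.exp_add, ← Complex.exp_neg]
    congr 1
    linear_combination (lam * x / 2 * Complex.I) * hs
  rw [e1, e2, e3, en1, en2, en3, hC]
  have hI4 : Complex.I ^ 4 = 1 := by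
    rw [show (4:ℕ) = 2*2 from rfl, pow_mul, Complex.I_sq]; ring
  field_simp
  ring_nf
  simp only [hI4, inv_pow, one_mul, mul_one]
  field_simp
  ring
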